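/- arXiv:1904.01274 — 2 statements merged into one kernel-verified Lean document; each statement's English description precedes it below -/
import Mathlib

section
/- The smallest eigenvalue of K̃_{2m} equals the smallest eigenvalue of the 3×3 matrix [[0, m, 0], [1, m-1, m], [0, m, m-1]]. -/
open Matrix Filter

/-- The smallest eigenvalue of a real matrix (infimum of its spectrum). -/
noncomputable def minEigM {n : Type*} [Fintype n] [DecidableEq n] (A : Matrix n n ℝ) : ℝ :=
  sInf (spectrum ℝ A)

/-- The largest eigenvalue of a real matrix (supremum of its spectrum). -/
noncomputable def maxEigM {n : Type*} [Fintype n] [DecidableEq n] (A : Matrix n n ℝ) : ℝ :=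
  sSup (spectrum ℝ A)

/-- The smallest adjacency eigenvalue of a finite simple graph. -/
noncomputable def graphMinEig {V : Type*} [Fintype V] [DecidableEq V] (G : SimpleGraph V) : ℝ := by
  classical exact minEigM (G.adjMatrix ℝ)

/-- The largest adjacency eigenvalue of a finite simple graph. -/
noncomputable def graphMaxEig {V : Type*} [Fintype V] [DecidableEq V] (G : SimpleGraph V) : ℝ := by
  classical exact maxEigM (G.adjMatrix ℝ)

/-- `K̃_{2m}`: the graph on `2m+1` vertices consisting of a complete graph on the
vertices `1,…,2m` together with the extra vertex `0` adjacent to exactly the `m`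
vertices `1,…,m`. -/
def tildeK (m : ℕ) : SimpleGraph (Fin (2 * m + 1)) where
  Adj a b := a ≠ b ∧ ((a ≠ 0 ∧ b ≠ 0) ∨ (a = 0 ∧ (b : ℕ) ≤ m) ∨ (b = 0 ∧ (a : ℕ) ≤ m))
  symm := by
    constructor
    rintro a b ⟨h1, h2⟩
    exact ⟨h1.symm, by tauto⟩
  loopless := by constructor; rintro a ⟨h1, _⟩; exact h1 rfl

/-!
Adding the identity to the adjacency matrix of `K̃_{2m}` gives a matrix whose `(i, j)` entry
depends only on the cells of `i` and `j` in the partition `{0}, {1,…,m}, {m+1,…,2m}`: it is the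
blow-up of `[[1,1,0],[1,1,1],[0,1,1]]`. Hence an eigenvector for an eigenvalue `μ ≠ -1` is
constant on the cells and descends to an eigenvector of the quotient matrix, while eigenvectors
of the quotient lift to the graph. So the two spectra differ at most by `-1`, and since the
characteristic polynomial of the quotient is positive at `-1` and negative far to the left, the
quotient has an eigenvalue `≤ -1`; the two minima therefore coincide.
-/

open Finset

namespace Matrix

variable {K n k : Type*} [Field K] [Fintype n] [Fintype k] [DecidableEq k]

theorem mem_spectrum_iff_exists_mulVec_eq_smul [DecidableEq n] {A : Matrix n n K} {μ : K} :
    μ ∈ spectrum K A ↔ ∃ v ≠ 0, A *ᵥ v = μ • v := by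
  rw [← spectrum_toLin', ← Module.End.hasEigenvalue_iff_mem_spectrum]
  constructor
  · intro h
    obtain ⟨v, hv⟩ := h.exists_hasEigenvector
    exact ⟨v, hv.2, by simpa using hv.apply_eq_smul⟩
  · rintro ⟨v, hv, hAv⟩
    exact Module.End.hasEigenvalue_of_hasEigenvector
      ⟨Module.End.mem_eigenspace_iff.mpr (by simpa using hAv), hv⟩

theorem submatrix_mulVec_comp (Q : Matrix k k K) (π : n → k) (u : k → K) :
    Q.submatrix π π *ᵥ (u ∘ π) =
      ((Q * diagonal fun c => (#{j | π j = c} : K)) *ᵥ u) ∘ π := by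
  ext i
  simp only [mulVec, dotProduct, Function.comp_apply, submatrix_apply, mul_diagonal]
  rw [← Finset.sum_fiberwise Finset.univ π]
  refine Finset.sum_congr rfl fun c _ => ?_
  rw [Finset.sum_congr rfl fun j hj => by rw [(Finset.mem_filter.mp hj).2], Finset.sum_const,
    nsmul_eq_mul]
  ring

variable [DecidableEq n] {A : Matrix n n K} {Q : Matrix k k K} {π : n → k} {c : K}

theorem mulVec_comp_of_add_smul_one_eq_submatrix (hA : A + c • 1 = Q.submatrix π π)
    (u : k → K) :
    A *ᵥ (u ∘ π) = ((Q * diagonal (fun c => (#{j | π j = c} : K)) - c • 1) *ᵥ u) ∘ π := by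
  rw [eq_sub_of_add_eq hA, sub_mulVec, submatrix_mulVec_comp, sub_mulVec, smul_mulVec,
    one_mulVec, smul_mulVec, one_mulVec]
  rfl

theorem spectrum_quotient_subset (hA : A + c • 1 = Q.submatrix π π)
    (hπ : Function.Surjective π) :
    spectrum K (Q * diagonal (fun c => (#{j | π j = c} : K)) - c • 1) ⊆ spectrum K A := by
  intro μ hμ
  obtain ⟨u, hu, hBu⟩ := mem_spectrum_iff_exists_mulVec_eq_smul.mp hμ
  refine mem_spectrum_iff_exists_mulVec_eq_smul.mpr ⟨u ∘ π, ?_, ?_⟩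
  · exact fun h => hu (hπ.injective_comp_right (h.trans (Pi.zero_comp π).symm))
  · rw [mulVec_comp_of_add_smul_one_eq_submatrix hA, hBu]
    rfl

theorem spectrum_subset_insert_quotient (hA : A + c • 1 = Q.submatrix π π)
    (hπ : Function.Surjective π) :
    spectrum K A ⊆
      insert (-c) (spectrum K (Q * diagonal (fun c => (#{j | π j = c} : K)) - c • 1)) := by
  intro μ hμ
  rw [Set.mem_insert_iff, or_iff_not_imp_left]
  intro hμc
  obtain ⟨v, hv, hAv⟩ := mem_spectrum_iff_exists_mulVec_eq_smul.mp hμ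
  have hμc' : μ + c ≠ 0 := fun h => hμc (eq_neg_of_add_eq_zero_left h)
  have hsum : (μ + c) • v = (Q.submatrix id π *ᵥ v) ∘ π := by
    calc (μ + c) • v = (A + c • 1) *ᵥ v := by
          rw [add_mulVec, smul_mulVec, one_mulVec, hAv, add_smul]
      _ = (Q.submatrix id π *ᵥ v) ∘ π := by rw [hA]; rfl
  set u : k → K := (μ + c)⁻¹ • (Q.submatrix id π *ᵥ v)
  have hvu : v = u ∘ π := by rw [Pi.smul_comp, ← hsum, inv_smul_smul₀ hμc']
  refine mem_spectrum_iff_exists_mulVec_eq_smul.mpr ⟨u, ?_, hπ.injective_comp_right ?_⟩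
  · intro hu
    exact hv (by rw [hvu, hu, Pi.zero_comp])
  · show _ ∘ π = _ ∘ π
    rw [← mulVec_comp_of_add_smul_one_eq_submatrix hA, ← hvu, hAv, hvu]
    rfl

end Matrix

theorem csInf_eq_of_subset_of_subset_insert {α : Type*} [ConditionallyCompleteLinearOrder α]
    {S T : Set α} {a : α} (hS : S.Finite) (hST : S ⊆ T) (hTS : T ⊆ insert a S)
    (ha : ∃ s ∈ S, s ≤ a) : sInf T = sInf S := by
  obtain ⟨s, hs, hsa⟩ := ha
  have hT : BddBelow T := ((hS.insert a).subset hTS).bddBelow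
  refine le_antisymm (csInf_le_csInf hT ⟨s, hs⟩ hST) (le_csInf ⟨s, hST hs⟩ fun t ht => ?_)
  rcases hTS ht with rfl | ht
  · exact (csInf_le hS.bddBelow hs).trans hsa
  · exact csInf_le hS.bddBelow ht

theorem Fin.card_filter_val (N : ℕ) (p : ℕ → Prop) [DecidablePred p] :
    #{i : Fin N | p i} = #{x ∈ range N | p x} := by
  rw [← card_map Fin.valEmbedding]
  congr 1
  ext x
  simp only [Finset.mem_map, mem_filter, mem_univ, true_and, Fin.valEmbedding_apply, mem_range]
  exact ⟨fun ⟨i, hi, hix⟩ => hix ▸ ⟨i.isLt, hi⟩, fun ⟨hx, hpx⟩ => ⟨⟨x, hx⟩, hpx, rfl⟩⟩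

def tildeKCell (m : ℕ) (i : Fin (2 * m + 1)) : Fin 3 :=
  if (i : ℕ) = 0 then 0 else if (i : ℕ) ≤ m then 1 else 2

def tildeKCellMatrix : Matrix (Fin 3) (Fin 3) ℝ := !![1, 1, 0; 1, 1, 1; 0, 1, 1]

def tildeKQuotient (m : ℕ) : Matrix (Fin 3) (Fin 3) ℝ :=
  !![0, (m : ℝ), 0; 1, (m : ℝ) - 1, (m : ℝ); 0, (m : ℝ), (m : ℝ) - 1]

theorem adjMatrix_tildeK_add_one (m : ℕ) [DecidableRel (tildeK m).Adj] :
    (tildeK m).adjMatrix ℝ + (1 : ℝ) • 1 =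
      tildeKCellMatrix.submatrix (tildeKCell m) (tildeKCell m) := by
  ext i j
  simp only [Matrix.add_apply, Matrix.smul_apply, one_apply, SimpleGraph.adjMatrix_apply,
    submatrix_apply, tildeKCell, tildeK, Fin.ext_iff, Fin.val_zero, ne_eq]
  split_ifs
  all_goals simp [tildeKCellMatrix]
  all_goals omega

theorem card_tildeKCell (m : ℕ) (c : Fin 3) : #{j | tildeKCell m j = c} = ![1, m, m] c := by
  refine (Fin.card_filter_val (2 * m + 1)
    (fun x => (if x = 0 then 0 else if x ≤ m then 1 else 2 : Fin 3) = c)).trans ?_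
  fin_cases c
  · convert card_singleton 0 using 2
    · ext x
      simp only [mem_filter, mem_range, mem_singleton]
      split_ifs <;> simp <;> omega
    · rfl
  · convert Nat.card_Icc 1 m using 2
    · ext x
      simp only [mem_filter, mem_range, mem_Icc]
      split_ifs <;> simp <;> omega
    · simp
  · convert Nat.card_Ioc m (2 * m) using 2
    · ext x
      simp only [mem_filter, mem_range, mem_Ioc]
      split_ifs <;> simp <;> omega
    · simp
      omega

theorem tildeKCellMatrix_mul_diagonal_card_sub_one (m : ℕ) :
    tildeKCellMatrix * diagonal (fun c => (#{j | tildeKCell m j = c} : ℝ)) - (1 : ℝ) • 1 =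
      tildeKQuotient m := by
  ext i j
  rw [Matrix.sub_apply, mul_diagonal, card_tildeKCell]
  fin_cases i <;> fin_cases j <;> simp [tildeKCellMatrix, tildeKQuotient]

theorem tildeKCell_surjective {m : ℕ} (hm : 0 < m) : Function.Surjective (tildeKCell m) := by
  intro c
  fin_cases c
  · exact ⟨0, rfl⟩
  · exact ⟨⟨1, by omega⟩, by simp [tildeKCell]; omega⟩
  · exact ⟨⟨m + 1, by omega⟩, by simp [tildeKCell]⟩

theorem det_algebraMap_sub_tildeKQuotient (m : ℕ) (x : ℝ) :
    (algebraMap ℝ (Matrix (Fin 3) (Fin 3) ℝ) x - tildeKQuotient m).det =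
      x * (x - (2 * m - 1)) * (x + 1) - m * (x - (m - 1)) := by
  simp [det_fin_three, algebraMap_matrix_apply, tildeKQuotient]
  ring

theorem exists_mem_spectrum_tildeKQuotient_le_neg_one {m : ℕ} (hm : 0 < m) :
    ∃ μ ∈ spectrum ℝ (tildeKQuotient m), μ ≤ -1 := by
  set f : ℝ → ℝ := fun x => x * (x - (2 * m - 1)) * (x + 1) - m * (x - (m - 1))
  have hm1 : (1 : ℝ) ≤ m := by exact_mod_cast hm
  have hsign : (0 : ℝ) ∈ Set.Icc (f (-1 - m)) (f (-1)) := by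
    have hleft : f (-1 - m) = -m ^ 2 - 3 * m ^ 3 := by ring
    have hright : f (-1) = m ^ 2 := by ring
    rw [hleft, hright]
    constructor <;> nlinarith
  obtain ⟨μ, hμ, hfμ⟩ :=
    intermediate_value_Icc (by linarith) (by fun_prop : Continuous f).continuousOn hsign
  refine ⟨μ, ?_, hμ.2⟩
  rw [spectrum.mem_iff, isUnit_iff_isUnit_det, isUnit_iff_ne_zero, not_ne_iff,
    det_algebraMap_sub_tildeKQuotient]
  exact hfμ

/-- The smallest eigenvalue of `K̃_{2m}` equals the smallest eigenvalue of the
quotient matrix `[[0, m, 0], [1, m-1, m], [0, m, m-1]]`. -/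
theorem stmt3 (m : ℕ) (hm : 0 < m) :
    graphMinEig (tildeK m) =
      minEigM !![0, (m : ℝ), 0; 1, (m : ℝ) - 1, (m : ℝ); 0, (m : ℝ), (m : ℝ) - 1] := by
  classical
  change graphMinEig (tildeK m) = minEigM (tildeKQuotient m)
  unfold graphMinEig minEigM
  have hA := adjMatrix_tildeK_add_one m
  have hπ := tildeKCell_surjective hm
  obtain ⟨μ, hμ, hμle⟩ := exists_mem_spectrum_tildeKQuotient_le_neg_one hm
  rw [← tildeKCellMatrix_mul_diagonal_card_sub_one m] at hμ ⊢
  exact csInf_eq_of_subset_of_subset_insert (finite_spectrum _)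
    (spectrum_quotient_subset hA hπ) (spectrum_subset_insert_quotient hA hπ) ⟨μ, hμ, hμle⟩
end

section
/- For every positive real λ there exists a positive integer m'(λ) such that the smallest eigenvalue of K̃_{2m'(λ)} is strictly less than -λ. -/
open Matrix Filter

/-! Rayleigh quotient: with `x = (-s, 1, …, 1, -1, …, -1)` (value `-s` at the apex `0`, `1` on its
neighbours `1, …, m`, `-1` on `m+1, …, 2m`) one finds `xᵀ A x = -2m(1 + s)` and `xᵀ x = s² + 2m`.
For `m = s²` the quotient is `-2(1 + s)/3`, which tends to `-∞` with `s`. -/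

theorem minEigM_lt_of_dotProduct_mulVec_lt {n : Type*} [Fintype n] [DecidableEq n]
    {A : Matrix n n ℝ} (hA : A.IsHermitian) {x : n → ℝ} {c : ℝ}
    (hx : x ⬝ᵥ A *ᵥ x < c * (x ⬝ᵥ x)) : minEigM A < c := by
  by_contra! hc
  have hpsd : (A - algebraMap ℝ _ c).PosSemidef := by
    refine posSemidef_iff_isHermitian_and_spectrum_nonneg.mpr ⟨hA.sub ?_, ?_⟩
    · rw [algebraMap_eq_diagonal]
      exact isHermitian_diagonal _
    · rw [← spectrum.sub_singleton_eq]
      rintro _ ⟨μ, hμ, _, rfl, rfl⟩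
      exact sub_nonneg.2 (hc.trans (csInf_le finite_real_spectrum.bddBelow hμ))
  have hnonneg := hpsd.dotProduct_mulVec_nonneg x
  rw [star_trivial, sub_mulVec, dotProduct_sub, Algebra.algebraMap_eq_smul_one, smul_mulVec,
    one_mulVec, dotProduct_smul, smul_eq_mul] at hnonneg
  linarith

def blockVec (m : ℕ) (a b c : ℝ) (j : Fin (2 * m + 1)) : ℝ :=
  if (j : ℕ) = 0 then a else if (j : ℕ) ≤ m then b else c

theorem sum_blockVec (m : ℕ) (a b c : ℝ) : ∑ j, blockVec m a b c j = a + m * b + m * c := by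
  refine (Fin.sum_univ_eq_sum_range
    (fun j => if j = 0 then a else if j ≤ m then b else c) _).trans ?_
  rw [Finset.sum_range_succ', two_mul, Finset.sum_range_add]
  have hnear : ∀ j ∈ Finset.range m,
      (if j + 1 = 0 then a else if j + 1 ≤ m then b else c) = b := by
    intro j hj; simp [Finset.mem_range.1 hj]
  have hfar : ∀ j ∈ Finset.range m,
      (if m + j + 1 = 0 then a else if m + j + 1 ≤ m then b else c) = c := by
    intro j _; simp
  rw [Finset.sum_congr rfl hnear, Finset.sum_congr rfl hfar]
  simp only [Finset.sum_const, Finset.card_range, nsmul_eq_mul, ↓reduceIte]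
  ring

theorem blockVec_mul (m : ℕ) (a b c a' b' c' : ℝ) :
    blockVec m a b c * blockVec m a' b' c' = blockVec m (a * a') (b * b') (c * c') := by
  ext j; simp only [Pi.mul_apply, blockVec]; split_ifs <;> rfl

theorem blockVec_dotProduct (m : ℕ) (a b c a' b' c' : ℝ) :
    blockVec m a b c ⬝ᵥ blockVec m a' b' c' = a * a' + m * (b * b') + m * (c * c') := by
  rw [dotProduct, ← sum_blockVec, ← blockVec_mul]; rfl

-- `K̃_{2m}` is `K_{2m+1}` with the edges from `0` to `m+1, …, 2m` removed.
theorem tildeK_adjMatrix_eq (m : ℕ) [DecidableRel (tildeK m).Adj] :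
    (tildeK m).adjMatrix ℝ = vecMulVec (blockVec m 1 1 1) (blockVec m 1 1 1) - 1
      - vecMulVec (blockVec m 1 0 0) (blockVec m 0 0 1)
      - vecMulVec (blockVec m 0 0 1) (blockVec m 1 0 0) := by
  ext i j
  simp only [SimpleGraph.adjMatrix_apply, tildeK, ne_eq, Matrix.sub_apply, vecMulVec_apply,
    one_apply, blockVec, Fin.ext_iff, Fin.val_zero]
  split_ifs <;> norm_num <;> omega

theorem blockVec_dotProduct_adjMatrix_mulVec (m : ℕ) [DecidableRel (tildeK m).Adj] (a b c : ℝ) :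
    blockVec m a b c ⬝ᵥ (tildeK m).adjMatrix ℝ *ᵥ blockVec m a b c
      = (a + m * b + m * c) ^ 2 - (a ^ 2 + m * b ^ 2 + m * c ^ 2) - 2 * a * (m * c) := by
  rw [dotProduct_mulVec]
  simp only [tildeK_adjMatrix_eq, vecMul_sub, vecMul_vecMulVec, vecMul_one, sub_dotProduct,
    smul_dotProduct, smul_eq_mul, blockVec_dotProduct]
  ring

/-- For every positive real `λ` there is a positive integer `m` with
`λ_min(K̃_{2m}) < -λ`. -/
theorem stmt4 (lam : ℝ) (hlam : 0 < lam) :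
    ∃ m : ℕ, 0 < m ∧ graphMinEig (tildeK m) < -lam := by
  classical
  obtain ⟨s, hs_pos, hs⟩ : ∃ s : ℕ, 0 < s ∧ 2 * lam ≤ s :=
    ⟨⌈2 * lam⌉₊, Nat.ceil_pos.2 (by positivity), Nat.le_ceil _⟩
  refine ⟨s ^ 2, by positivity, minEigM_lt_of_dotProduct_mulVec_lt
    ((tildeK _).isHermitian_adjMatrix ℝ) (x := blockVec (s ^ 2) (-s) 1 (-1)) ?_⟩
  have hs_one : (1 : ℝ) ≤ s := by exact_mod_cast hs_pos
  rw [blockVec_dotProduct_adjMatrix_mulVec, blockVec_dotProduct]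
  push_cast
  nlinarith
end
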